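/- arXiv:1309.2109 — 4 statements merged into one kernel-verified Lean document; each statement's English description precedes it below -/
import Mathlib

section
/- For all n ≥ 0, the Daehee numbers satisfy D_n = ∑_{l=0}^{n} s(n,l) B_l, where s(n,l) are the (signed) Stirling numbers of the first kind and B_l are the Bernoulli numbers. -/
open PowerSeries Finset

noncomputable def logOneAdd : PowerSeries ℚ :=
  PowerSeries.mk fun k => if k = 0 then 0 else (-1 : ℚ)^(k+1) / k

noncomputable def onePow (x : ℚ) : PowerSeries ℚ :=
  PowerSeries.mk fun k => (∏ i ∈ Finset.range k, (x - (i : ℚ))) / (Nat.factorial k : ℚ)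

noncomputable def expX (x : ℚ) : PowerSeries ℚ :=
  PowerSeries.mk fun k => x ^ k / (Nat.factorial k : ℚ)

/-!
Let `L : ℚ[X] → ℚ` be the umbral evaluation `X ^ l ↦ B_l`. The recurrence
`∑_{j < l} C(l, j) B_j = [l = 1]` says exactly that `L (p (X + 1)) = L p + p'(0)`.
For the falling factorial, `(X + 1)_{n+1} = (X)_{n+1} + (n + 1) (X)_n`, so
`(n + 1) L (X)_n = (X)_{n+1}'(0) = (-1)^n n!`, and `(-1)^n n! / (n + 1)` is also the
coefficient read off from `log (1 + t) / t`.
-/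

namespace Polynomial

noncomputable def bernoulliUmbral : ℚ[X] →ₗ[ℚ] ℚ :=
  lsum fun l => LinearMap.mulRight ℚ (_root_.bernoulli l)

theorem bernoulliUmbral_monomial (l : ℕ) (a : ℚ) :
    bernoulliUmbral (monomial l a) = a * _root_.bernoulli l := by
  simp [bernoulliUmbral, sum_monomial_index]

theorem bernoulliUmbral_eq_sum_range {p : ℚ[X]} {n : ℕ} (hp : p.natDegree < n) :
    bernoulliUmbral p = ∑ l ∈ range n, p.coeff l * _root_.bernoulli l :=
  sum_over_range' p (f := fun l a => a * _root_.bernoulli l) (fun _ => zero_mul _) n hp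

theorem bernoulliUmbral_X_add_one_pow (l : ℕ) :
    bernoulliUmbral ((X + 1) ^ l) = _root_.bernoulli l + if l = 1 then 1 else 0 := by
  have hdeg : ((X + 1 : ℚ[X]) ^ l).natDegree < l + 1 := by
    rw [← C_1, natDegree_pow_X_add_C]; exact l.lt_succ_self
  rw [bernoulliUmbral_eq_sum_range hdeg, sum_range_succ, ← _root_.sum_bernoulli l]
  simp only [coeff_X_add_one_pow, Nat.choose_self, Nat.cast_one, one_mul]
  ring

theorem bernoulliUmbral_comp_X_add_one (p : ℚ[X]) :
    bernoulliUmbral (p.comp (X + 1)) = bernoulliUmbral p + p.coeff 1 := by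
  induction p using Polynomial.induction_on' with
  | add p q hp hq => rw [add_comp, map_add, map_add, hp, hq, coeff_add]; ring
  | monomial l a =>
    rw [← C_mul_X_pow_eq_monomial, mul_comp, C_comp, X_pow_comp, ← smul_eq_C_mul, map_smul,
      bernoulliUmbral_X_add_one_pow, C_mul_X_pow_eq_monomial, bernoulliUmbral_monomial,
      coeff_monomial]
    rcases eq_or_ne l 1 with rfl | hl
    · simp only [if_true, smul_eq_mul]; ring
    · simp [hl]

theorem descPochhammer_succ_comp_X_add_one {R : Type*} [CommRing R] (n : ℕ) :
    (descPochhammer R (n + 1)).comp (X + 1) =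
      descPochhammer R (n + 1) + (n + 1 : R[X]) * descPochhammer R n := by
  conv_lhs => rw [descPochhammer_succ_left]
  rw [mul_comp, X_comp, comp_assoc, sub_comp, X_comp, one_comp, add_sub_cancel_right, comp_X,
    descPochhammer_succ_right]
  ring

theorem descPochhammer_eval_neg_one {R : Type*} [CommRing R] (n : ℕ) :
    (descPochhammer R n).eval (-1) = (-1) ^ n * n.factorial := by
  have h := ascPochhammer_eval_neg_eq_descPochhammer R (-1) n
  rw [neg_neg, ascPochhammer_eval_one, eq_comm] at h
  rw [← h, ← mul_assoc, ← mul_pow, neg_one_mul, neg_neg, one_pow, one_mul]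

theorem coeff_one_descPochhammer_succ {R : Type*} [CommRing R] (n : ℕ) :
    (descPochhammer R (n + 1)).coeff 1 = (-1) ^ n * n.factorial := by
  rw [descPochhammer_succ_left, coeff_X_mul, coeff_zero_eq_eval_zero, eval_comp, eval_sub,
    eval_X, eval_one, zero_sub, descPochhammer_eval_neg_one]

theorem bernoulliUmbral_descPochhammer (n : ℕ) :
    bernoulliUmbral (descPochhammer ℚ n) = (-1) ^ n * n.factorial / (n + 1) := by
  have h := bernoulliUmbral_comp_X_add_one (descPochhammer ℚ (n + 1))
  rw [descPochhammer_succ_comp_X_add_one, map_add, coeff_one_descPochhammer_succ,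
    add_right_inj] at h
  rw [eq_div_iff (by positivity), ← h, show (n + 1 : ℚ[X]) = C (n + 1 : ℚ) by simp,
    ← smul_eq_C_mul, map_smul, smul_eq_mul, mul_comm]

theorem descPochhammer_eq_sum_C_mul_X_pow {R : Type*} [CommRing R] [IsDomain R] [Infinite R]
    {n : ℕ} {s : ℕ → R} (hs : ∀ x : R, ∏ i ∈ range n, (x - i) = ∑ l ∈ range (n + 1), s l * x ^ l) :
    descPochhammer R n = ∑ l ∈ range (n + 1), C (s l) * X ^ l :=
  funext fun x => by simp [descPochhammer_eval_eq_prod_range, eval_finsetSum, hs]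

end Polynomial

theorem eq_of_mk_mul_X_eq_logOneAdd {D : ℕ → ℚ}
    (hD : mk (fun n => D n / n.factorial) * X = logOneAdd) (n : ℕ) :
    D n = (-1) ^ n * n.factorial / (n + 1) := by
  have h := congrArg (coeff (n + 1)) hD
  rw [coeff_succ_mul_X, coeff_mk, logOneAdd, coeff_mk, if_neg n.succ_ne_zero] at h
  rw [div_eq_iff (by positivity)] at h
  rw [h]
  push_cast
  ring

theorem eq_bernoulli_of_mk_mul_exp_sub_one {B : ℕ → ℚ}
    (hB : mk (fun l => B l / l.factorial) * (exp ℚ - 1) = X) (l : ℕ) :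
    B l = bernoulli l := by
  have hexp : exp ℚ - 1 ≠ 0 := fun h => by simpa using congrArg (coeff 1) h
  have h := congrArg (coeff l)
    (mul_right_cancel₀ hexp (hB.trans (bernoulliPowerSeries_mul_exp_sub_one ℚ).symm))
  rw [coeff_mk, bernoulliPowerSeries, coeff_mk, Algebra.algebraMap_self, RingHom.id_apply,
    div_left_inj' (by positivity)] at h
  exact h

theorem daehee_stirling_bernoulli (D B : ℕ → ℚ) (s : ℕ → ℕ → ℚ)
    (hD : PowerSeries.mk (fun n => D n / (Nat.factorial n : ℚ)) * PowerSeries.X = logOneAdd) (hB : PowerSeries.mk (fun l => B l / (Nat.factorial l : ℚ)) * (PowerSeries.exp ℚ - 1) = PowerSeries.X) (hs : ∀ (n : ℕ) (x : ℚ), ∏ i ∈ Finset.range n, (x - (i : ℚ)) = ∑ l ∈ Finset.range (n + 1), s n l * x ^ l) :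
    ∀ n : ℕ, D n = ∑ l ∈ Finset.range (n + 1), s n l * B l := by
  intro n
  rw [eq_of_mk_mul_X_eq_logOneAdd hD, ← Polynomial.bernoulliUmbral_descPochhammer,
    Polynomial.descPochhammer_eq_sum_C_mul_X_pow (hs n), map_sum]
  refine sum_congr rfl fun l _ => ?_
  rw [Polynomial.C_mul_X_pow_eq_monomial, Polynomial.bernoulliUmbral_monomial,
    eq_bernoulli_of_mk_mul_exp_sub_one hB]
end

section
/- For all n ≥ 0, the Daehee polynomials satisfy D_n(x) = ∑_{l=0}^{n} s(n,l) B_l(x), where s(n,l) are the signed Stirling numbers of the first kind and B_l(x) are the Bernoulli polynomials. -/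
/-!
Substituting `t ↦ log(1+t)` into the Bernoulli generating function `t e^{xt}/(e^t-1)` gives the
Daehee generating function, because `e^{log(1+t)} - 1 = t` and `e^{x log(1+t)} = (1+t)^x`; the
latter holds since both sides solve `(1+t) F' = x F` with `F(0) = 1`. Reading off the coefficient
of `tⁿ` then needs `n! [tⁿ] log(1+t)^l = l! s(n,l)`, which comes from comparing the coefficients
of `x^l` in `n! [tⁿ] e^{x log(1+t)} = x(x-1)⋯(x-n+1)`.
-/

open PowerSeries Finset

open scoped Nat

namespace PowerSeries

variable {R : Type*} [CommRing R]

theorem coeff_pow_eq_zero_of_lt {f : R⟦X⟧} (hf : constantCoeff f = 0) {n m : ℕ} (h : n < m) :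
    coeff n (f ^ m) = 0 := by
  obtain ⟨u, hu⟩ := pow_dvd_pow_of_dvd (X_dvd_iff.2 hf) m
  rw [hu, coeff_X_pow_mul', if_neg h.not_ge]

theorem coeff_subst_eq_sum_range {g : R⟦X⟧} (hg : constantCoeff g = 0) (f : R⟦X⟧) (n : ℕ) :
    coeff n (f.subst g) = ∑ m ∈ range (n + 1), coeff m f * coeff n (g ^ m) := by
  rw [coeff_subst' (HasSubst.of_constantCoeff_zero' hg), finsum_eq_sum_of_support_subset]
  · rfl
  · intro m hm
    by_contra h
    simp only [coe_range, Set.mem_Iio, not_lt] at h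
    exact hm (by simp only [coeff_pow_eq_zero_of_lt hg (show n < m by omega), smul_zero])

theorem coeff_one_add_X_mul_derivative (f : R⟦X⟧) (n : ℕ) :
    coeff n ((1 + X) * d⁄dX R f) = (n + 1) * coeff (n + 1) f + n * coeff n f := by
  rcases n with _ | n
  · rw [add_mul, one_mul, map_add, coeff_zero_X_mul, coeff_derivative]
    simp
  · rw [add_mul, one_mul, map_add, coeff_succ_X_mul, coeff_derivative, coeff_derivative]
    push_cast
    ring

theorem one_add_X_mul_derivative_log {A : Type*} [CommRing A] [Algebra ℚ A] :
    (1 + X) * d⁄dX A (log A) = 1 := by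
  ext n
  rw [deriv_log, add_mul, one_mul, map_add, coeff_one]
  rcases n with _ | n
  · simp
  · rw [coeff_succ_X_mul, coeff_mk, coeff_mk, ← map_add]
    simp [pow_succ]

theorem eq_of_one_add_X_mul_derivative_eq_smul {K : Type*} [Field K] [CharZero K]
    {a : K} {f g : K⟦X⟧} (hf : (1 + X) * d⁄dX K f = a • f) (hg : (1 + X) * d⁄dX K g = a • g)
    (h0 : constantCoeff f = constantCoeff g) : f = g := by
  ext n
  induction n with
  | zero => simpa using h0
  | succ n ih =>
    have hfn := congrArg (coeff n) hf
    have hgn := congrArg (coeff n) hg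
    rw [coeff_one_add_X_mul_derivative, coeff_smul, smul_eq_mul] at hfn hgn
    apply mul_left_cancel₀ (Nat.cast_add_one_ne_zero n : (n + 1 : K) ≠ 0)
    linear_combination hfn - hgn + (a - n) * ih

end PowerSeries

theorem Polynomial.coeff_eq_of_forall_eval_eq_sum {R : Type*} [CommRing R] [IsDomain R]
    [Infinite R] {p : Polynomial R} {n : ℕ} {c : ℕ → R}
    (h : ∀ y, p.eval y = ∑ l ∈ range (n + 1), c l * y ^ l) {l : ℕ} (hl : l ≤ n) :
    p.coeff l = c l := by
  have hp : p = ∑ l ∈ range (n + 1), Polynomial.C (c l) * Polynomial.X ^ l :=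
    Polynomial.funext fun y => by simp [h, Polynomial.eval_finsetSum]
  rw [hp, Polynomial.finsetSum_coeff]
  simp [Polynomial.coeff_C_mul, Polynomial.coeff_X_pow, Nat.lt_succ_of_le hl]

theorem logOneAdd_eq_log : logOneAdd = log ℚ := by
  ext n
  simp [logOneAdd]

theorem derivative_expX (y : ℚ) : d⁄dX ℚ (expX y) = y • expX y := by
  ext n
  simp only [expX, coeff_derivative, coeff_smul, coeff_mk, smul_eq_mul, Nat.factorial_succ]
  push_cast
  field_simp
  ring

theorem one_add_X_mul_derivative_onePow (y : ℚ) :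
    (1 + X) * d⁄dX ℚ (onePow y) = y • onePow y := by
  ext n
  rw [coeff_one_add_X_mul_derivative, coeff_smul, onePow, coeff_mk, coeff_mk, prod_range_succ,
    Nat.factorial_succ, smul_eq_mul]
  push_cast
  field_simp
  ring

theorem expX_subst_log (y : ℚ) : (expX y).subst (log ℚ) = onePow y := by
  refine eq_of_one_add_X_mul_derivative_eq_smul (a := y) ?_ (one_add_X_mul_derivative_onePow y) ?_
  · rw [derivative_subst HasSubst.log, derivative_expX, subst_smul HasSubst.log, smul_mul_assoc,
      mul_smul_comm, mul_left_comm, one_add_X_mul_derivative_log, mul_one]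
  · rw [← coeff_zero_eq_constantCoeff_apply, ← coeff_zero_eq_constantCoeff_apply,
      coeff_subst_eq_sum_range constantCoeff_log]
    simp [expX, onePow]

theorem exp_sub_one_subst_log : (exp ℚ - 1).subst (log ℚ) = X := by
  have hexp : exp ℚ = expX 1 := by
    ext n
    simp [expX]
  have hone : onePow 1 = 1 + X := by
    ext n
    rcases n with _ | _ | n
    · simp [onePow]
    · simp [onePow]
    · rw [onePow, coeff_mk, prod_eq_zero (mem_range.2 (show 1 < n + 2 by omega)) (by norm_num)]
      simp [coeff_X]
  rw [subst_sub HasSubst.log, hexp, expX_subst_log, hone, ← coe_substAlgHom HasSubst.log, map_one,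
    add_sub_cancel_left]

theorem PowerSeries.factorial_mul_coeff_log_pow (n l : ℕ) :
    (n ! : ℚ) * coeff n (log ℚ ^ l) = l ! * (descPochhammer ℚ n).coeff l := by
  rcases le_or_gt l n with hl | hl
  · have heval : ∀ y : ℚ, (descPochhammer ℚ n).eval y =
        ∑ m ∈ range (n + 1), n ! / m ! * coeff n (log ℚ ^ m) * y ^ m := by
      intro y
      have h := congrArg (coeff n) (expX_subst_log y)
      simp only [coeff_subst_eq_sum_range constantCoeff_log, onePow, expX, coeff_mk] at h
      rw [eq_div_iff (by positivity)] at h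
      rw [descPochhammer_eval_eq_prod_range, ← h, sum_mul]
      exact sum_congr rfl fun m _ => by ring
    rw [Polynomial.coeff_eq_of_forall_eval_eq_sum heval hl]
    field_simp
  · rw [coeff_pow_eq_zero_of_lt constantCoeff_log hl, Polynomial.coeff_eq_zero_of_natDegree_lt
      (by rwa [descPochhammer_natDegree])]
    simp

theorem daehee_poly_stirling_bernoulli (Dp : ℕ → ℚ → ℚ) (Bp : ℕ → ℚ → ℚ) (s : ℕ → ℕ → ℚ)
    (hDp : ∀ x : ℚ, PowerSeries.mk (fun n => Dp n x / (Nat.factorial n : ℚ)) * PowerSeries.X = logOneAdd * onePow x) (hBp : ∀ x : ℚ, PowerSeries.mk (fun m => Bp m x / (Nat.factorial m : ℚ)) * (PowerSeries.exp ℚ - 1) = PowerSeries.X * expX x) (hs : ∀ (n : ℕ) (x : ℚ), ∏ i ∈ Finset.range n, (x - (i : ℚ)) = ∑ l ∈ Finset.range (n + 1), s n l * x ^ l) :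
    ∀ (n : ℕ) (x : ℚ), Dp n x = ∑ l ∈ Finset.range (n + 1), s n l * Bp l x := by
  intro n x
  set B := mk fun m => Bp m x / (m ! : ℚ)
  have hD : mk (fun n => Dp n x / (n ! : ℚ)) = B.subst (log ℚ) := by
    apply mul_X_cancel
    rw [hDp, logOneAdd_eq_log, ← exp_sub_one_subst_log, ← subst_mul HasSubst.log, hBp,
      subst_mul HasSubst.log, subst_X HasSubst.log, expX_subst_log]
  have hcoeff : ∀ l ≤ n, (descPochhammer ℚ n).coeff l = s n l := fun l hl =>
    Polynomial.coeff_eq_of_forall_eval_eq_sum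
      (fun y => by rw [descPochhammer_eval_eq_prod_range, hs]) hl
  calc Dp n x = n ! * coeff n (B.subst (log ℚ)) := by
        rw [← hD, coeff_mk]
        field_simp
    _ = ∑ l ∈ range (n + 1), Bp l x / l ! * (n ! * coeff n (log ℚ ^ l)) := by
        rw [coeff_subst_eq_sum_range constantCoeff_log, mul_sum]
        exact sum_congr rfl fun l _ => by rw [coeff_mk]; ring
    _ = ∑ l ∈ range (n + 1), s n l * Bp l x := sum_congr rfl fun l hl => by
        rw [factorial_mul_coeff_log_pow, hcoeff l (mem_range_succ_iff.1 hl)]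
        field_simp
end

section
/- For all n ≥ 0, the Daehee number D_n equals B_n^{(n+2)}(1), the value at x = 1 of the Bernoulli polynomial of order n+2 and degree n. -/
open PowerSeries Finset

/-!
Write `U = t/(eᵗ - 1)` for the Bernoulli generating function. Both sides of the identity
equal `(-1)ⁿ/(n+1)` after division by `n!`: for the Daehee number this is the coefficient of
`log(1+t)`, and for the Bernoulli value it is the coefficient `[tⁿ] eᵗ U^(n+2)`.
Differentiating `U (eᵗ - 1) = t` gives `t U' = U - U² - t U`, hence
`t (U^k)' = k (U^k - U^(k+1) - t U^k)`. Comparing coefficients yields a recursion in which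
the diagonal `[tⁿ] U^(n+1)` only changes sign, and the relation `eᵗ U = t + U` then turns
`[tⁿ] eᵗ U^(n+2)` into `[tⁿ] U^(n+1) / (n+1)`.
-/

namespace PowerSeries

theorem coeff_X_mul_derivative {R : Type*} [CommSemiring R] (f : R⟦X⟧) (n : ℕ) :
    coeff n (X * d⁄dX R f) = n * coeff n f := by
  cases n with
  | zero => simp
  | succ n => rw [coeff_succ_X_mul, coeff_derivative, mul_comm, Nat.cast_succ]

section Bernoulli

variable (A : Type*) [CommRing A] [Algebra ℚ A]

local notation "U" => bernoulliPowerSeries A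

theorem constantCoeff_bernoulliPowerSeries : constantCoeff U = 1 := by
  simp [bernoulliPowerSeries]

theorem bernoulliPowerSeries_mul_exp : U * exp A = X + U := by
  linear_combination bernoulliPowerSeries_mul_exp_sub_one A

theorem X_mul_derivative_bernoulliPowerSeries : X * d⁄dX A U = U - U ^ 2 - X * U := by
  have hderiv := congrArg (d⁄dX A) (bernoulliPowerSeries_mul_exp_sub_one A)
  rw [Derivation.leibniz, map_sub, derivative_exp, derivative_one, derivative_X,
    smul_eq_mul, smul_eq_mul, sub_zero] at hderiv
  linear_combination (-d⁄dX A U) * bernoulliPowerSeries_mul_exp_sub_one A + U * hderiv -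
    U * bernoulliPowerSeries_mul_exp A

theorem X_mul_derivative_bernoulliPowerSeries_pow (k : ℕ) :
    X * d⁄dX A (U ^ k) = (k : A⟦X⟧) * (U ^ k - U ^ (k + 1) - X * U ^ k) := by
  cases k with
  | zero => simp
  | succ k =>
    rw [derivative_pow, Nat.add_sub_cancel]
    push_cast
    linear_combination ((k + 1 : A⟦X⟧) * U ^ k) * X_mul_derivative_bernoulliPowerSeries A

theorem coeff_bernoulliPowerSeries_pow_rec (k m : ℕ) :
    m * coeff m (U ^ k) =
      k * (coeff m (U ^ k) - coeff m (U ^ (k + 1)) - coeff m (X * U ^ k)) := by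
  have h := congrArg (coeff m) (X_mul_derivative_bernoulliPowerSeries_pow A k)
  rwa [coeff_X_mul_derivative, ← map_natCast (C (R := A)), coeff_C_mul, map_sub, map_sub] at h

theorem coeff_bernoulliPowerSeries_pow_succ_self (n : ℕ) : coeff n (U ^ (n + 1)) = (-1) ^ n := by
  induction n with
  | zero => simp [constantCoeff_bernoulliPowerSeries]
  | succ n ih =>
    have hrec := coeff_bernoulliPowerSeries_pow_rec A (n + 1) (n + 1)
    rw [coeff_succ_X_mul, ih] at hrec
    have hunit : IsUnit ((n + 1 : ℕ) : A) := by
      rw [← map_natCast (algebraMap ℚ A)]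
      exact (IsUnit.mk0 _ (by positivity)).map _
    refine hunit.mul_left_cancel ?_
    linear_combination hrec

theorem coeff_exp_mul_bernoulliPowerSeries_pow (n : ℕ) :
    (n + 1) * coeff n (exp A * U ^ (n + 2)) = (-1) ^ n := by
  have hsplit : exp A * U ^ (n + 2) = X * U ^ (n + 1) + U ^ (n + 1 + 1) := by
    linear_combination U ^ (n + 1) * bernoulliPowerSeries_mul_exp A
  have hrec := coeff_bernoulliPowerSeries_pow_rec A (n + 1) n
  rw [hsplit, map_add, ← coeff_bernoulliPowerSeries_pow_succ_self A n]
  push_cast at hrec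
  linear_combination hrec

theorem eq_mul_bernoulliPowerSeries_pow {f g : A⟦X⟧} {k : ℕ}
    (h : f * (exp A - 1) ^ k = X ^ k * g) : f = g * U ^ k := by
  refine X_pow_mul_cancel (k := k) ?_
  have hX : (X : A⟦X⟧) ^ k = U ^ k * (exp A - 1) ^ k := by
    rw [← mul_pow, bernoulliPowerSeries_mul_exp_sub_one]
  linear_combination U ^ k * h + f * hX

end Bernoulli

end PowerSeries

theorem daehee_eq_higher_bernoulli (D : ℕ → ℚ) (OB : ℕ → ℚ → ℕ → ℚ)
    (hD : PowerSeries.mk (fun n => D n / (Nat.factorial n : ℚ)) * PowerSeries.X = logOneAdd) (hOB : ∀ (α : ℕ) (x : ℚ), PowerSeries.mk (fun n => OB α x n / (Nat.factorial n : ℚ)) * (PowerSeries.exp ℚ - 1) ^ α = PowerSeries.X ^ α * expX x) :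
    ∀ n : ℕ, D n = OB (n + 2) 1 n := by
  intro n
  have hDaehee : D n / n.factorial = (-1) ^ n / (n + 1) := by
    have h := congrArg (coeff (n + 1)) hD
    rw [mul_comm, coeff_succ_X_mul, coeff_mk, logOneAdd, coeff_mk, if_neg n.succ_ne_zero] at h
    rw [h]
    push_cast
    ring
  have hexpX : expX 1 = exp ℚ := by
    ext k
    simp [expX, coeff_exp]
  have hBernoulli : OB (n + 2) 1 n / n.factorial = (-1) ^ n / (n + 1) := by
    have h := eq_mul_bernoulliPowerSeries_pow ℚ (hexpX ▸ hOB (n + 2) 1)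
    rw [eq_div_iff (Nat.cast_add_one_ne_zero n), mul_comm,
      ← coeff_exp_mul_bernoulliPowerSeries_pow ℚ n, ← h, coeff_mk]
  rw [← div_left_inj' (Nat.cast_ne_zero.mpr n.factorial_ne_zero), hDaehee, hBernoulli]
end

section
/- For all n ≥ 1, (-1)^n D_n/n! = ∑_{m=1}^{n} C(n-1, m-1) Ď_m/m!, where D_n are the Daehee numbers and Ď_m are the Daehee numbers of the second kind. -/
open PowerSeries Finset

/-!
Comparing coefficients gives `D n / n! = (-1)^n / (n+1)` and, for `m ≥ 1`,
`Ď m / m! = (-1)^(m+1) / (m (m+1))`. Since `C(n-1, m-1) / (m (m+1)) = C(n+1, m+1) / (n (n+1))`,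
the right-hand side is `(n (n+1))⁻¹ ∑_{m=1}^n (-1)^(m+1) C(n+1, m+1)`, and this alternating sum
equals `n` because the full alternating sum of `C(n+1, ·)` vanishes and its first two terms
are `1 - (n+1)`.
-/

theorem sum_Icc_one_eq_sum_range {M : Type*} [AddCommMonoid M] (f : ℕ → M) (n : ℕ) :
    ∑ m ∈ Icc 1 n, f m = ∑ k ∈ range n, f (k + 1) := by
  rw [range_eq_Ico, sum_Ico_add']
  rfl

theorem sum_Icc_one_neg_one_pow_succ_mul_choose (n : ℕ) :
    ∑ m ∈ Icc 1 n, (-1 : ℚ) ^ (m + 1) * (n + 1).choose (m + 1) = n := by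
  have h := Int.alternating_sum_range_choose (n := n + 1)
  rw [if_neg n.succ_ne_zero, sum_range_succ', sum_range_succ'] at h
  rw [sum_Icc_one_eq_sum_range]
  have h' : ∑ k ∈ range n, (-1 : ℤ) ^ (k + 1 + 1) * (n + 1).choose (k + 1 + 1) = n := by
    simp only [zero_add, pow_zero, pow_one, Nat.choose_zero_right, Nat.choose_one_right] at h
    push_cast at h
    linarith
  exact_mod_cast h'

theorem PowerSeries.coeff_of_mul_X_eq {R : Type*} [Semiring R] {f g : PowerSeries R}
    (h : f * X = g) (n : ℕ) : coeff n f = coeff (n + 1) g := by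
  rw [← h, coeff_succ_mul_X]

theorem coeff_logOneAdd_of_ne_zero {n : ℕ} (hn : n ≠ 0) :
    coeff n logOneAdd = (-1 : ℚ) ^ (n + 1) / n := by
  simp [logOneAdd, hn]

theorem choose_add_two_mul (n m : ℕ) :
    (n + 2).choose (m + 2) * ((m + 2) * (m + 1)) = (n + 2) * (n + 1) * n.choose m := by
  rw [← mul_assoc, ← Nat.add_one_mul_choose_eq, mul_assoc, ← Nat.add_one_mul_choose_eq]
  ring

theorem cast_choose_sub_one_div {n m : ℕ} (hn : n ≠ 0) (hm : m ≠ 0) :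
    ((n - 1).choose (m - 1) : ℚ) / (m * (m + 1)) = (n + 1).choose (m + 1) / (n * (n + 1)) := by
  obtain ⟨n, rfl⟩ := Nat.exists_eq_succ_of_ne_zero hn
  obtain ⟨m, rfl⟩ := Nat.exists_eq_succ_of_ne_zero hm
  have h : ((n + 2).choose (m + 2) * ((m + 2) * (m + 1)) : ℚ) = (n + 2) * (n + 1) * n.choose m := by
    exact_mod_cast choose_add_two_mul n m
  rw [div_eq_div_iff (by positivity) (by positivity)]
  push_cast
  linear_combination -h

section Daehee

variable {D Dh : ℕ → ℚ}

theorem daehee_div_factorial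
    (hD : PowerSeries.mk (fun n => D n / (Nat.factorial n : ℚ)) * PowerSeries.X = logOneAdd)
    (n : ℕ) : D n / n.factorial = (-1) ^ n / (n + 1) := by
  simpa [coeff_logOneAdd_of_ne_zero n.succ_ne_zero, pow_succ] using coeff_of_mul_X_eq hD n

theorem daehee2_div_factorial
    (hDh : PowerSeries.mk (fun n => Dh n / (Nat.factorial n : ℚ)) * PowerSeries.X =
      (1 + PowerSeries.X) * logOneAdd)
    {m : ℕ} (hm : m ≠ 0) : Dh m / m.factorial = (-1) ^ (m + 1) / (m * (m + 1)) := by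
  have h := coeff_of_mul_X_eq hDh m
  rw [coeff_mk, add_mul, one_mul, map_add, coeff_succ_X_mul, coeff_logOneAdd_of_ne_zero hm,
    coeff_logOneAdd_of_ne_zero m.add_one_ne_zero] at h
  rw [h]
  push_cast
  field_simp
  ring

end Daehee

theorem daehee_daehee2_relation (D Dh : ℕ → ℚ)
    (hD : PowerSeries.mk (fun n => D n / (Nat.factorial n : ℚ)) * PowerSeries.X = logOneAdd) (hDh : PowerSeries.mk (fun n => Dh n / (Nat.factorial n : ℚ)) * PowerSeries.X = (1 + PowerSeries.X) * logOneAdd) :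
    ∀ n : ℕ, 1 ≤ n →
      (-1 : ℚ) ^ n * D n / (Nat.factorial n : ℚ) =
        ∑ m ∈ Finset.Icc 1 n, ((n - 1).choose (m - 1) : ℚ) * Dh m / (Nat.factorial m : ℚ) := by
  intro n hn
  have hn0 : n ≠ 0 := Nat.one_le_iff_ne_zero.mp hn
  calc (-1 : ℚ) ^ n * D n / n.factorial = 1 / (n + 1) := by
        rw [mul_div_assoc, daehee_div_factorial hD, ← mul_div_assoc, ← pow_add, ← two_mul,
          pow_mul]
        norm_num
    _ = (∑ m ∈ Icc 1 n, (-1 : ℚ) ^ (m + 1) * (n + 1).choose (m + 1)) / (n * (n + 1)) := by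
        rw [sum_Icc_one_neg_one_pow_succ_mul_choose]
        field_simp
    _ = ∑ m ∈ Icc 1 n, ((n - 1).choose (m - 1) : ℚ) * Dh m / m.factorial := by
        rw [sum_div]
        refine sum_congr rfl fun m hm => ?_
        have hm0 : m ≠ 0 := Nat.one_le_iff_ne_zero.mp (mem_Icc.mp hm).1
        rw [mul_div_assoc, mul_div_assoc, daehee2_div_factorial hDh hm0,
          ← cast_choose_sub_one_div hn0 hm0]
        ring
end
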